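/- arXiv:1304.4927 — 6 statements merged into one kernel-verified Lean document; each statement's English description precedes it below -/
import Mathlib

section
/- Let R be a finite ring with identity and let χ be a generating character of R. Then for every x ∈ R, μ(0, Rx) = Σ_{y : Ry = Rx} χ(y), where the sum is over all elements y of R generating the same principal left ideal as x, and μ(0, Rx) is the value of the Möbius function of the poset of principal left ideals of R (ordered by inclusion) on the interval from the zero ideal to Rx. -/
/-!
Put `T J = ∑_{Ry = J} χ y` for a principal left ideal `J`. Every `y ∈ J` generates exactly one
principal left ideal below `J`, so `∑_{I ≤ J} T I = ∑_{y ∈ J} χ y`, and this is `1` for `J = 0`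
and `0` otherwise, because `χ` restricts to a nontrivial character of the finite group `J`.
The function `I ↦ μ(0, I)` has the same sums over lower intervals, and on a finite poset these
sums determine the function.
-/

/-- `χ` is a generating character of the ring `R`: an additive character of `R` (with
values in the multiplicative monoid of `ℂ`, hence in the nonzero complex numbers) whose
restriction to every nonzero principal left ideal of `R` is not the trivial character. -/
def IsGeneratingCharacter {R : Type*} [Ring R] (χ : AddChar R ℂ) : Prop :=
  ∀ I : Ideal R, (∃ x : R, I = Ideal.span {x}) → I ≠ ⊥ → ∃ y ∈ I, χ y ≠ 1

/-- `μ` is the Möbius function of the partial order `α`. -/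
def IsMobiusFunction {α : Type*} [PartialOrder α] (μ : α → α → ℤ) : Prop :=
  (∀ a : α, μ a a = 1) ∧
  (∀ a b : α, ¬ a ≤ b → μ a b = 0) ∧
  (∀ a b : α, a < b → ∑ᶠ c ∈ {c : α | a ≤ c ∧ c ≤ b}, μ a c = 0)

theorem eq_of_forall_finsum_mem_Iic_eq {α M : Type*} [PartialOrder α] [Finite α]
    [AddCancelCommMonoid M] {f g : α → M}
    (h : ∀ a, ∑ᶠ c ∈ Set.Iic a, f c = ∑ᶠ c ∈ Set.Iic a, g c) : f = g := by
  funext a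
  induction a using WellFoundedLT.induction with
  | ind a ih =>
    have hIio : ∑ᶠ c ∈ Set.Iio a, f c = ∑ᶠ c ∈ Set.Iio a, g c := finsum_mem_congr rfl ih
    have hIic := h a
    rw [← Set.Iio_insert, finsum_mem_insert _ Set.self_notMem_Iio (Set.toFinite _),
      finsum_mem_insert _ Set.self_notMem_Iio (Set.toFinite _), hIio] at hIic
    exact add_right_cancel hIic

theorem IsMobiusFunction.finsum_mem_Iic_eq_ite {α : Type*} [PartialOrder α] [DecidableEq α]
    {μ : α → α → ℤ} (hμ : IsMobiusFunction μ) {a : α} (ha : IsBot a) (b : α) :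
    ∑ᶠ c ∈ Set.Iic b, μ a c = if b = a then 1 else 0 := by
  split_ifs with hb
  · rw [hb, ha.isMin.Iic_eq, finsum_mem_singleton, hμ.1]
  · have hIcc : Set.Iic b = {c | a ≤ c ∧ c ≤ b} := by
      ext c
      simp [ha c]
    rw [hIcc, hμ.2.2 a b (lt_of_le_of_ne (ha b) (Ne.symm hb))]

theorem AddChar.finsum_mem_addSubgroup_eq_zero {G R : Type*} [AddGroup G] [Finite G]
    [CommSemiring R] [IsDomain R] (ψ : AddChar G R) {H : AddSubgroup G} (h : ∃ y ∈ H, ψ y ≠ 1) :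
    ∑ᶠ y ∈ (H : Set G), ψ y = 0 := by
  classical
  obtain ⟨y, hyH, hy⟩ := h
  have : Fintype H := Fintype.ofFinite H
  let ψH : AddChar H R := ψ.compAddMonoidHom H.subtype
  have hψH : ψH ≠ 0 := AddChar.ne_zero_iff.2 ⟨⟨y, hyH⟩, hy⟩
  rw [← finsum_set_coe_eq_finsum_mem, finsum_eq_sum_of_fintype]
  exact ψH.sum_eq_ite.trans (if_neg hψH)

theorem IsGeneratingCharacter.finsum_mem_span_singleton_eq_ite {R : Type*} [Ring R] [Finite R]
    [DecidableEq R] {χ : AddChar R ℂ} (hχ : IsGeneratingCharacter χ) (x : R) :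
    ∑ᶠ y ∈ (Ideal.span {x} : Set R), χ y = if x = 0 then 1 else 0 := by
  split_ifs with hx
  · simp [hx]
  · obtain ⟨y, hy, hχy⟩ := hχ _ ⟨x, rfl⟩ (by simpa using hx)
    exact χ.finsum_mem_addSubgroup_eq_zero (H := (Ideal.span {x}).toAddSubgroup) ⟨y, hy, hχy⟩

theorem finsum_mem_Iic_finsum_mem_span_singleton_eq {R M : Type*} [Semiring R] [Finite R]
    [AddCommMonoid M] (f : R → M) (J : {J : Ideal R // ∃ y : R, J = Ideal.span {y}}) :
    ∑ᶠ c ∈ Set.Iic J, ∑ᶠ y ∈ {y : R | Ideal.span {y} = c.1}, f y =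
      ∑ᶠ y ∈ (J.1 : Set R), f y := by
  have hdisj : (Set.Iic J).PairwiseDisjoint fun c => {y : R | Ideal.span {y} = c.1} :=
    fun c _ d _ hcd => Set.disjoint_left.2 fun y hc hd => hcd (Subtype.ext (hc.symm.trans hd))
  rw [← finsum_mem_biUnion hdisj (Set.toFinite _) fun _ _ => Set.toFinite _]
  refine finsum_mem_congr (Set.ext fun y => ?_) fun _ _ => rfl
  simp only [Set.mem_iUnion, Set.mem_ofPred_eq, Set.mem_Iic, SetLike.mem_coe, exists_prop]
  constructor
  · rintro ⟨c, hcJ, hyc⟩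
    exact hcJ (hyc ▸ Ideal.mem_span_singleton_self y)
  · exact fun hy => ⟨⟨Ideal.span {y}, y, rfl⟩, (Ideal.span_singleton_le_iff_mem J.1).2 hy, rfl⟩

/-- If `χ` is a generating character of the finite ring `R`, then for every
`x ∈ R`, `μ(0, Rx) = Σ_{y : Ry = Rx} χ(y)`, where `μ` is the Möbius function of the poset
of principal left ideals of `R` ordered by inclusion. -/
theorem mobius_eq_sum_generating_character (R : Type*) [Ring R] [Fintype R]
    (χ : AddChar R ℂ) (hχ : IsGeneratingCharacter χ)
    (μ : {J : Ideal R // ∃ y : R, J = Ideal.span {y}} →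
         {J : Ideal R // ∃ y : R, J = Ideal.span {y}} → ℤ)
    (hμ : IsMobiusFunction μ) (x : R) :
    (μ ⟨Ideal.span {(0 : R)}, 0, rfl⟩ ⟨Ideal.span {x}, x, rfl⟩ : ℂ) =
      ∑ᶠ y ∈ {y : R | Ideal.span {y} = Ideal.span {x}}, χ y := by
  classical
  let bot : {J : Ideal R // ∃ y : R, J = Ideal.span {y}} := ⟨Ideal.span {(0 : R)}, 0, rfl⟩
  have hbot : IsBot bot := fun J => show Ideal.span {0} ≤ J.1 by simp
  have key : (fun J => (μ bot J : ℂ)) = fun J => ∑ᶠ y ∈ {y : R | Ideal.span {y} = J.1}, χ y := by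
    refine eq_of_forall_finsum_mem_Iic_eq fun J => ?_
    obtain ⟨J, z, rfl⟩ := J
    have hμJ := congrArg (Int.castAddHom ℂ) (hμ.finsum_mem_Iic_eq_ite hbot ⟨_, z, rfl⟩)
    rw [(Int.castAddHom ℂ).map_finsum_mem _ (Set.toFinite _)] at hμJ
    rw [finsum_mem_Iic_finsum_mem_span_singleton_eq, hχ.finsum_mem_span_singleton_eq_ite]
    simpa [bot, Ideal.span_singleton_eq_bot] using hμJ
  exact congr_fun key ⟨Ideal.span {x}, x, rfl⟩
end

section
/- Let R be a finite ring with identity, χ a generating character of R, and w a left homogeneous weight on R with average value λ. Then for every x ∈ R, w(x) = λ · (1 − (1/φ(x)) · Σ_{y : Ry = Rx} χ(y)), where the sum is over all elements y of R generating the same principal left ideal as x, and φ(x) is the number of such elements y (equality of complex numbers, with w(x) and λ regarded as complex). -/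
/-- `w` is a left homogeneous weight on the ring `R` with average value `lam ≥ 0`. -/
def IsHomogeneousWeight {R : Type*} [Ring R] (w : R → ℝ) (lam : ℝ) : Prop :=
  0 ≤ lam ∧ w 0 = 0 ∧
  (∀ x y : R, Ideal.span {x} = Ideal.span {y} → w x = w y) ∧
  (∀ x : R, x ≠ 0 →
    ∑ᶠ y ∈ ((Ideal.span {x} : Ideal R) : Set R), w y =
      lam * (Nat.card (Ideal.span {x} : Ideal R) : ℝ))

section Aux

variable {R : Type*} [Ring R] [Fintype R]

open Classical in
/-- The class of elements generating the same principal left ideal as `x`. -/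
noncomputable def wcls (x : R) : Finset R :=
  Finset.univ.filter fun y => Ideal.span {y} = Ideal.span {x}

open Classical in
/-- The principal left ideal generated by `x`, as a finset. -/
noncomputable def wball (x : R) : Finset R :=
  Finset.univ.filter fun y => y ∈ Ideal.span {x}

lemma mem_wcls {x y : R} : y ∈ wcls x ↔ Ideal.span {y} = Ideal.span {x} := by
  simp [wcls]

lemma mem_wball {x y : R} : y ∈ wball x ↔ y ∈ Ideal.span {x} := by
  simp [wball]

lemma self_mem_wcls (x : R) : x ∈ wcls x := mem_wcls.2 rfl

lemma wcls_card_pos (x : R) : 0 < (wcls x).card :=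
  Finset.card_pos.2 ⟨x, self_mem_wcls x⟩

lemma wcls_eq_of_span_eq {x y : R} (h : Ideal.span {y} = Ideal.span {x}) :
    wcls y = wcls x := by
  ext z; simp [mem_wcls, h]

lemma char_sum_zero (χ : AddChar R ℂ) (hχ : IsGeneratingCharacter χ) {x : R} (hx : x ≠ 0) :
    ∑ y ∈ wball x, χ y = 0 := by
  classical
  obtain ⟨y, hyI, hy1⟩ := hχ (Ideal.span {x}) ⟨x, rfl⟩
    (by simpa [Ideal.span_singleton_eq_bot] using hx)
  set I := Ideal.span {x} with hI
  let χ' : AddChar I ℂ := χ.compAddMonoidHom I.subtype.toAddMonoidHom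
  have hne : χ' ≠ 1 := by
    rw [AddChar.ne_one_iff]
    exact ⟨⟨y, hyI⟩, hy1⟩
  have h0 : ∑ a : I, χ' a = 0 := AddChar.sum_eq_zero_of_ne_one hne
  rw [Finset.sum_subtype (wball x) (fun z => mem_wball) (fun z => χ z)]
  exact h0

lemma key (χ : AddChar R ℂ) (hχ : IsGeneratingCharacter χ)
    (w : R → ℝ) (lam : ℝ) (hw : IsHomogeneousWeight w lam) (x : R) :
    (w x : ℂ) = (lam : ℂ) * (1 - ((wcls x).card : ℂ)⁻¹ * ∑ y ∈ wcls x, χ y) := by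
  classical
  obtain ⟨hlam, hw0, hH1, hH2⟩ := hw
  obtain ⟨n, hn⟩ : ∃ n, (wball x).card = n := ⟨_, rfl⟩
  induction n using Nat.strong_induction_on generalizing x with
  | _ n ih =>
  by_cases hx0 : x = 0
  · subst hx0
    have hc : wcls (0 : R) = {0} := by
      have hbot : Ideal.span {(0 : R)} = ⊥ := Ideal.span_singleton_eq_bot.mpr rfl
      ext z
      simp [mem_wcls, hbot, Ideal.span_singleton_eq_bot]
    rw [hc]
    simp [hw0]
  · set S := wball x with hS
    set p : R → Prop := fun y => Ideal.span {y} = Ideal.span {x} with hp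
    set T := S.filter p with hT
    set S' := S.filter (fun y => ¬ p y) with hS'
    have hTcls : T = wcls x := by
      ext z
      simp only [hT, Finset.mem_filter, mem_wcls, hp, hS, mem_wball]
      constructor
      · rintro ⟨_, h⟩; exact h
      · intro h
        refine ⟨?_, h⟩
        rw [← h]
        exact Ideal.mem_span_singleton_self z
    -- the averaging hypothesis, in finset/complex form
    have hsum : ∑ y ∈ S, (w y : ℂ) = (lam : ℂ) * (S.card : ℂ) := by
      have h2 := hH2 x hx0
      have hset : ((Ideal.span {x} : Ideal R) : Set R) = ↑S := by
        ext z; simp [hS, mem_wball]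
      have hcard : Nat.card (Ideal.span {x} : Ideal R) = S.card := by
        rw [Nat.card_eq_fintype_card, Fintype.card_subtype]
        apply congrArg Finset.card
        ext z; simp [hS, mem_wball]
      rw [hset, finsum_mem_coe_finset, hcard] at h2
      calc ∑ y ∈ S, (w y : ℂ) = ((∑ y ∈ S, w y : ℝ) : ℂ) := by push_cast; ring
        _ = (lam : ℂ) * (S.card : ℂ) := by rw [h2]; push_cast; ring
    have hsplit : ∑ y ∈ S, (w y : ℂ) = ∑ y ∈ T, (w y : ℂ) + ∑ y ∈ S', (w y : ℂ) :=
      (Finset.sum_filter_add_sum_filter_not S p _).symm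
    -- the sum over the class of x
    have hTsum : ∑ y ∈ T, (w y : ℂ) = ((wcls x).card : ℂ) * (w x : ℂ) := by
      have hconst : ∀ y ∈ T, (w y : ℂ) = (w x : ℂ) := by
        intro y hy
        have h := hH1 x y ((mem_wcls.1 (hTcls ▸ hy)).symm)
        exact_mod_cast h.symm
      rw [Finset.sum_congr rfl hconst, Finset.sum_const, nsmul_eq_mul, hTcls]
    -- induction applies to each element of S'
    have hS'w : ∀ y ∈ S', (w y : ℂ)
        = (lam : ℂ) * (1 - ((wcls y).card : ℂ)⁻¹ * ∑ z ∈ wcls y, χ z) := by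
      intro y hy
      obtain ⟨hyS, hyne⟩ := Finset.mem_filter.1 hy
      have hle : Ideal.span {y} ≤ Ideal.span {x} :=
        (Ideal.span_singleton_le_iff_mem _).2 (mem_wball.1 hyS)
      have hsub : wball y ⊂ wball x := by
        rw [Finset.ssubset_def]
        constructor
        · intro z hz
          exact mem_wball.2 (hle (mem_wball.1 hz))
        · intro hcon
          apply hyne
          apply le_antisymm hle
          rw [Ideal.span_singleton_le_iff_mem]
          exact mem_wball.1 (hcon (mem_wball.2 (Ideal.mem_span_singleton_self x)))
      exact ih _ (hn ▸ Finset.card_lt_card hsub) y rfl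
    -- Claim A : fiberwise resummation
    have claimA : ∑ y ∈ S', (((wcls y).card : ℂ)⁻¹ * ∑ z ∈ wcls y, χ z)
        = ∑ z ∈ S', χ z := by
      set t := S'.image (fun y => Ideal.span {y}) with ht
      have hmaps : ∀ y ∈ S', Ideal.span {y} ∈ t := fun y hy => Finset.mem_image_of_mem _ hy
      rw [← Finset.sum_fiberwise_of_maps_to hmaps
            (fun y => ((wcls y).card : ℂ)⁻¹ * ∑ z ∈ wcls y, χ z),
          ← Finset.sum_fiberwise_of_maps_to hmaps (fun z => (χ z : ℂ))]
      refine Finset.sum_congr rfl fun J hJ => ?_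
      obtain ⟨y₀, hy₀S', hy₀J⟩ := Finset.mem_image.1 hJ
      obtain ⟨hy₀S, hy₀ne⟩ := Finset.mem_filter.1 hy₀S'
      have hfiber : S'.filter (fun y => Ideal.span {y} = J) = wcls y₀ := by
        ext z
        rw [Finset.mem_filter, mem_wcls, ← hy₀J]
        constructor
        · rintro ⟨_, h⟩; exact h
        · intro h
          have hzy : z ∈ Ideal.span {y₀} := by
            rw [← h]; exact Ideal.mem_span_singleton_self z
          have hy₀le : Ideal.span {y₀} ≤ Ideal.span {x} :=
            (Ideal.span_singleton_le_iff_mem _).2 (mem_wball.1 hy₀S)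
          have hne' : ¬ p z := by
            simp only [hp] at hy₀ne ⊢
            rw [h]; exact hy₀ne
          have hzS : z ∈ S := mem_wball.2 (hy₀le hzy)
          have hzS' : z ∈ S' := by
            rw [hS', Finset.mem_filter]; exact ⟨hzS, hne'⟩
          exact ⟨hzS', h⟩
      rw [hfiber]
      have hconst : ∀ z ∈ wcls y₀, (((wcls z).card : ℂ)⁻¹ * ∑ u ∈ wcls z, χ u)
          = ((wcls y₀).card : ℂ)⁻¹ * ∑ u ∈ wcls y₀, χ u := by
        intro z hz
        rw [wcls_eq_of_span_eq (mem_wcls.1 hz)]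
      rw [Finset.sum_congr rfl hconst, Finset.sum_const, nsmul_eq_mul, ← mul_assoc,
        mul_inv_cancel₀ (Nat.cast_ne_zero.2 (wcls_card_pos y₀).ne'), one_mul]
    -- Claim B : character sum over the whole ideal vanishes
    have claimB : ∑ z ∈ S', χ z = - ∑ z ∈ wcls x, χ z := by
      have h0 : ∑ z ∈ S, χ z = 0 := char_sum_zero χ hχ hx0
      have h1 : ∑ z ∈ T, χ z + ∑ z ∈ S', χ z = 0 := by
        rw [Finset.sum_filter_add_sum_filter_not S p (fun z => χ z)]
        exact h0
      rw [hTcls] at h1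
      linear_combination h1
    -- sum over S' of the weights
    have hS'sum : ∑ y ∈ S', (w y : ℂ)
        = (lam : ℂ) * (S'.card : ℂ) + (lam : ℂ) * ∑ z ∈ wcls x, χ z := by
      rw [Finset.sum_congr rfl hS'w, ← Finset.mul_sum, Finset.sum_sub_distrib,
        Finset.sum_const, claimA, claimB, nsmul_eq_mul, mul_one]
      ring
    -- cardinalities
    have hcard' : (S.card : ℂ) = ((wcls x).card : ℂ) + (S'.card : ℂ) := by
      have := Finset.card_filter_add_card_filter_not (s := S) (p := p)
      rw [← hT] at this
      rw [← this, hTcls]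
      push_cast
      ring
    have hc0 : ((wcls x).card : ℂ) ≠ 0 := Nat.cast_ne_zero.2 (wcls_card_pos x).ne'
    have hmain : ((wcls x).card : ℂ) * (w x : ℂ)
        = (lam : ℂ) * ((wcls x).card : ℂ) - (lam : ℂ) * ∑ z ∈ wcls x, χ z := by
      have h := hsum
      rw [hsplit, hTsum, hS'sum, hcard'] at h
      linear_combination h
    apply mul_left_cancel₀ hc0
    rw [hmain]
    field_simp

end Aux

/-- If `χ` is a generating character and `w` a left homogeneous weight with
average value `λ` on a finite ring `R`, then for every `x ∈ R`,
`w x = λ (1 - (1/φ(x)) Σ_{y : Ry = Rx} χ(y))` as complex numbers, where `φ(x)` is the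
number of elements `y` with `Ry = Rx`. -/
theorem homogeneous_weight_eq_character_sum_over_class (R : Type*) [Ring R] [Fintype R]
    (χ : AddChar R ℂ) (hχ : IsGeneratingCharacter χ)
    (w : R → ℝ) (lam : ℝ) (hw : IsHomogeneousWeight w lam) (x : R) :
    (w x : ℂ) = (lam : ℂ) *
      (1 - (1 / (Nat.card {y : R // Ideal.span {y} = Ideal.span {x}} : ℂ)) *
        ∑ᶠ y ∈ {y : R | Ideal.span {y} = Ideal.span {x}}, χ y) := by
  classical
  have h := key χ hχ w lam hw x
  have h1 : {y : R | Ideal.span {y} = Ideal.span {x}} = ↑(wcls x) := by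
    ext z; simp [mem_wcls]
  have h2 : Nat.card {y : R // Ideal.span {y} = Ideal.span {x}} = (wcls x).card := by
    rw [Nat.card_eq_fintype_card, Fintype.card_subtype]
    apply congrArg Finset.card
    ext z; simp [mem_wcls]
  rw [h1, finsum_mem_coe_finset, h2, one_div]
  exact h
end

section
/- Let R be a finite chain ring with maximal ideal Rγ and nilpotency index e, let q be the cardinality of the residue field R/Rγ, and let w be a homogeneous weight on R with average value λ. Then for every x ∈ R: w(x) = 0 if x = 0; w(x) = λq/(q−1) if x ≠ 0 and x lies in the ideal generated by γ^{e−1}; and w(x) = λ otherwise. -/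
/-- Let `R` be a finite chain ring (a finite commutative local ring whose
maximal ideal is `Rγ`) with nilpotency index `e`, residue field of cardinality `q`, and
let `w` be a homogeneous weight on `R` with average value `λ`. Then `w 0 = 0`;
`w x = λq/(q-1)` for nonzero `x` in the ideal generated by `γ^(e-1)`; and `w x = λ`
otherwise. -/
theorem chain_ring_homogeneous_weight (R : Type*) [CommRing R] [Fintype R] [IsLocalRing R]
    (γ : R) (hmax : IsLocalRing.maximalIdeal R = Ideal.span {γ})
    (e : ℕ) (he : 0 < e) (hγe : γ ^ e = 0) (hγe1 : γ ^ (e - 1) ≠ 0)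
    (q : ℕ) (hq : q = Nat.card (R ⧸ (Ideal.span {γ} : Ideal R)))
    (w : R → ℝ) (lam : ℝ) (hw : IsHomogeneousWeight w lam) (x : R) :
    (x = 0 → w x = 0) ∧
    (x ≠ 0 → x ∈ Ideal.span {γ ^ (e - 1)} → w x = lam * q / (q - 1)) ∧
    (x ≠ 0 → x ∉ Ideal.span {γ ^ (e - 1)} → w x = lam) := by
  classical
  obtain ⟨hlam, hw0, hww, hsum⟩ := hw
  -- γ^i ≠ 0 for i ≤ e-1
  have hpow_ne : ∀ i ≤ e - 1, γ ^ i ≠ 0 := by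
    intro i hi h0
    apply hγe1
    have : γ ^ (e-1) = γ ^ i * γ ^ (e-1-i) := by rw [← pow_add, Nat.add_sub_cancel' hi]
    rw [this, h0, zero_mul]
  -- γ^i ∉ span {γ^(i+1)} for i ≤ e-1
  have hnotin : ∀ i ≤ e - 1, γ ^ i ∉ Ideal.span {γ ^ (i+1)} := by
    intro i hi hmem
    rw [Ideal.mem_span_singleton] at hmem
    obtain ⟨c, hc⟩ := hmem
    have h1 : γ ^ i * (1 - γ * c) = 0 := by
      rw [mul_sub, mul_one, show γ ^ i * (γ * c) = γ ^ (i+1) * c by rw [pow_succ]; ring,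
        ← hc, sub_self]
    have hu : IsUnit (1 - γ * c) := by
      apply IsLocalRing.isUnit_one_sub_self_of_mem_nonunits
      rw [← IsLocalRing.mem_maximalIdeal, hmax]
      exact Ideal.mul_mem_right c _ (Ideal.mem_span_singleton_self γ)
    exact hpow_ne i hi (by
      obtain ⟨u, hu⟩ := hu
      calc γ ^ i = γ ^ i * (1 - γ * c) * ↑u⁻¹ := by
            rw [← hu, mul_assoc, Units.mul_inv, mul_one]
        _ = 0 := by rw [h1, zero_mul])
  -- elements of span {γ^i} not in span {γ^(i+1)} generate span {γ^i}
  have hgen : ∀ (i : ℕ) (y : R), y ∈ Ideal.span {γ ^ i} → y ∉ Ideal.span {γ ^ (i+1)} →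
      Ideal.span {y} = Ideal.span {γ ^ i} := by
    intro i y hy hy'
    rw [Ideal.mem_span_singleton] at hy
    obtain ⟨c, rfl⟩ := hy
    have hc : IsUnit c := by
      by_contra hc
      apply hy'
      have hcm : c ∈ IsLocalRing.maximalIdeal R := (IsLocalRing.mem_maximalIdeal c).2 hc
      rw [hmax, Ideal.mem_span_singleton] at hcm
      obtain ⟨d, rfl⟩ := hcm
      rw [Ideal.mem_span_singleton, pow_succ]
      exact ⟨d, by ring⟩
    exact Ideal.span_singleton_mul_right_unit hc _
  -- span {γ^(i+1)} ⊆ span {γ^i}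
  have hsub : ∀ i : ℕ, Ideal.span {γ ^ (i+1)} ≤ Ideal.span {γ ^ i} :=
    fun i => Ideal.span_singleton_le_span_singleton.2 (pow_dvd_pow γ (Nat.le_succ i))
  -- Finsets
  set F : ℕ → Finset R := fun i => ((Ideal.span {γ ^ i} : Ideal R) : Set R).toFinset with hF
  have hFmem : ∀ i y, y ∈ F i ↔ y ∈ Ideal.span {γ ^ i} := by
    intro i y; simp [hF]
  have hFcard : ∀ i, (F i).card = Nat.card (Ideal.span {γ ^ i} : Ideal R) := by
    intro i
    have h1 : Nat.card (Ideal.span {γ ^ i} : Ideal R)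
        = Nat.card ((Ideal.span {γ ^ i} : Ideal R) : Set R) := rfl
    rw [h1, Nat.card_coe_set_eq, Set.ncard_eq_toFinset_card']
  have hsum' : ∀ i ≤ e - 1, ∑ y ∈ F i, w y = lam * ((F i).card : ℝ) := by
    intro i hi
    have := hsum (γ ^ i) (hpow_ne i hi)
    rw [← Set.coe_toFinset ((Ideal.span {γ ^ i} : Ideal R) : Set R),
      finsum_mem_coe_finset] at this
    rw [hFcard]
    exact this
  have hFsub : ∀ i, F (i+1) ⊆ F i := by
    intro i y hy
    rw [hFmem] at hy ⊢
    exact hsub i hy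
  -- Step A : w (γ^i) = lam for i+1 ≤ e-1
  have stepA : ∀ i, i + 1 ≤ e - 1 → w (γ ^ i) = lam := by
    intro i hi
    have hi' : i ≤ e - 1 := le_trans (Nat.le_succ i) hi
    have hsplit := Finset.sum_sdiff (f := w) (hFsub i)
    have hconst : ∑ y ∈ F i \ F (i+1), w y = ((F i \ F (i+1)).card : ℝ) * w (γ ^ i) := by
      rw [Finset.sum_congr rfl (fun y hy => ?_), Finset.sum_const, nsmul_eq_mul]
      rw [Finset.mem_sdiff, hFmem, hFmem] at hy
      exact hww y (γ ^ i) (hgen i y hy.1 hy.2)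
    rw [hsum' i hi', hsum' (i+1) hi, hconst] at hsplit
    have hcardlt : (F (i+1)).card < (F i).card := by
      apply Finset.card_lt_card
      refine ⟨hFsub i, fun hss => ?_⟩
      exact hnotin i hi' ((hFmem (i+1) _).1 (hss ((hFmem i _).2
        (Ideal.mem_span_singleton_self _))))
    have hcsd : ((F i \ F (i+1)).card : ℝ) = (F i).card - (F (i+1)).card := by
      rw [Finset.card_sdiff_of_subset (hFsub i), Nat.cast_sub (Finset.card_le_card (hFsub i))]
    rw [hcsd] at hsplit
    have hne : ((F i).card : ℝ) - (F (i+1)).card ≠ 0 := by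
      have : ((F (i+1)).card : ℝ) < (F i).card := by exact_mod_cast hcardlt
      linarith
    have : (((F i).card : ℝ) - (F (i+1)).card) * w (γ ^ i)
        = (((F i).card : ℝ) - (F (i+1)).card) * lam := by ring_nf; ring_nf at hsplit; linarith
    exact mul_left_cancel₀ hne this
  -- cardinality of span {γ^(e-1)} is q
  have hqcard : Nat.card (Ideal.span {γ ^ (e-1)} : Ideal R) = q := by
    have hker : LinearMap.ker (LinearMap.toSpanSingleton R R (γ ^ (e-1))) = Ideal.span {γ} := by
      ext r
      rw [LinearMap.mem_ker, LinearMap.toSpanSingleton_apply, smul_eq_mul,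
        Ideal.mem_span_singleton]
      constructor
      · intro h
        by_contra hr
        have hr' : IsUnit r := by
          by_contra hru
          exact hr (Ideal.mem_span_singleton.1 (by
            rw [← hmax]; exact hru) |>.elim (fun c hc => ⟨c, hc⟩))
        obtain ⟨u, rfl⟩ := hr'
        exact hγe1 (by
          calc γ ^ (e-1) = ↑u⁻¹ * (↑u * γ ^ (e-1)) := by rw [← mul_assoc, Units.inv_mul, one_mul]
            _ = 0 := by rw [h, mul_zero])
      · rintro ⟨c, rfl⟩
        have h2 : γ * c * γ ^ (e-1) = c * (γ ^ (e - 1) * γ) := by ring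
        have hee : e - 1 + 1 = e := by omega
        rw [h2, ← pow_succ, hee, hγe, mul_zero]
    have hrange : LinearMap.range (LinearMap.toSpanSingleton R R (γ ^ (e-1)))
        = Ideal.span {γ ^ (e-1)} := by
      rw [← LinearMap.span_singleton_eq_range]
    have := Nat.card_congr (LinearMap.quotKerEquivRange
      (LinearMap.toSpanSingleton R R (γ ^ (e-1)))).toEquiv
    rw [hker, hrange] at this
    rw [← this, hq]
  -- q ≥ 2
  have hq2 : 2 ≤ q := by
    rw [hq]
    have : Ideal.span {γ} ≠ ⊤ := by
      rw [← hmax]; exact Ideal.IsMaximal.ne_top inferInstance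
    have : Nontrivial (R ⧸ (Ideal.span {γ} : Ideal R)) := Ideal.Quotient.nontrivial_iff.mpr this
    exact Finite.one_lt_card
  -- Step B : w (γ^(e-1)) = lam * q / (q-1)
  have stepB : w (γ ^ (e-1)) = lam * q / (q - 1) := by
    have h0F : (0 : R) ∈ F (e-1) := (hFmem _ _).2 (Ideal.zero_mem _)
    have hsplit : ∑ y ∈ F (e-1), w y = w 0 + ∑ y ∈ F (e-1) \ {0}, w y := by
      rw [← Finset.sum_sdiff (Finset.singleton_subset_iff.2 h0F), Finset.sum_singleton]
      ring
    have hconst : ∑ y ∈ F (e-1) \ {0}, w y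
        = ((F (e-1) \ {0}).card : ℝ) * w (γ ^ (e-1)) := by
      rw [Finset.sum_congr rfl (fun y hy => ?_), Finset.sum_const, nsmul_eq_mul]
      rw [Finset.mem_sdiff, Finset.mem_singleton, hFmem] at hy
      refine hww y (γ ^ (e-1)) (hgen (e-1) y hy.1 ?_)
      have hee : e - 1 + 1 = e := by omega
      rw [hee, hγe, Ideal.span_singleton_eq_bot.2 rfl, Ideal.mem_bot]
      exact hy.2
    have hcard : (F (e-1)).card = q := by rw [hFcard, hqcard]
    have hcsd : ((F (e-1) \ {0}).card : ℝ) = (q : ℝ) - 1 := by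
      rw [Finset.card_sdiff_of_subset (Finset.singleton_subset_iff.2 h0F), Finset.card_singleton,
        hcard, Nat.cast_sub (by omega)]
      simp
    have hs := hsum' (e-1) le_rfl
    rw [hsplit, hw0, zero_add, hconst, hcsd, hcard] at hs
    have hne : (q : ℝ) - 1 ≠ 0 := by
      have : (2 : ℝ) ≤ q := by exact_mod_cast hq2
      linarith
    field_simp
    linarith [hs]
  refine ⟨fun h => h ▸ hw0, fun hx hxe => ?_, fun hx hxe => ?_⟩
  · -- x nonzero in span {γ^(e-1)}
    have hx' : x ∉ Ideal.span {γ ^ (e-1+1)} := by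
      have hee : e - 1 + 1 = e := by omega
      rw [hee, hγe, Ideal.span_singleton_eq_bot.2 rfl, Ideal.mem_bot]
      exact hx
    rw [hww x (γ ^ (e-1)) (hgen (e-1) x hxe hx'), stepB]
  · -- x nonzero not in span {γ^(e-1)}
    set i := Nat.findGreatest (fun i => x ∈ Ideal.span {γ ^ i}) e with hi
    have hP : x ∈ Ideal.span {γ ^ i} := by
      apply Nat.findGreatest_spec (P := fun j => x ∈ Ideal.span {γ ^ j}) (m := 0) (Nat.zero_le e)
      rw [pow_zero, Ideal.span_singleton_one]
      exact Submodule.mem_top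
    have hile : i ≤ e := Nat.findGreatest_le e
    have hine : i ≠ e := by
      intro h
      rw [h, hγe, Ideal.span_singleton_eq_bot.2 rfl, Ideal.mem_bot] at hP
      exact hx hP
    have hilt : i < e := lt_of_le_of_ne hile hine
    have hnP : x ∉ Ideal.span {γ ^ (i+1)} :=
      Nat.findGreatest_is_greatest (P := fun j => x ∈ Ideal.span {γ ^ j})
        (Nat.lt_succ_self i) hilt
    have hspan := hgen i x hP hnP
    have hiene : i ≠ e - 1 := by
      intro h
      exact hxe (h ▸ hP)
    have : i + 1 ≤ e - 1 := by omega
    rw [hww x (γ ^ i) hspan, stepA i this]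
end

section
/- Let R = R_1 × ⋯ × R_s be a finite product of finite chain rings, where for each k the ring R_k has maximal ideal R_kγ_k, nilpotency index e_k, and residue field of cardinality q_k. Let w be a homogeneous weight on R with average value λ. Let x = (x_1, …, x_s) ∈ R with x_k = u_k·γ_k^{j_k} for a unit u_k ∈ R_k^× and an integer 0 ≤ j_k ≤ e_k, and set i_k = e_k − j_k. Then: if i_k ≥ 2 for some index k, then w(x) = λ; and if i_k ≤ 1 for every k, then w(x) = λ·(1 − (−1)^β/Π_{k : i_k = 1}(q_k − 1)), where β is the number of indices k with i_k = 1. -/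
open Finset

theorem finsum_mem_const {α M : Type*} [AddCommMonoid M] {s : Set α} (hs : s.Finite) (c : M) :
    ∑ᶠ _ ∈ s, c = s.ncard • c := by
  rw [finsum_mem_eq_finite_toFinset_sum _ hs, sum_const, Set.ncard_eq_toFinset_card s hs]

theorem finsum_mem_univ_pi_prod {ι M : Type*} [Fintype ι] [DecidableEq ι] [CommSemiring M]
    {κ : ι → Type*} [∀ i, Finite (κ i)] (s : ∀ i, Set (κ i)) (f : ∀ i, κ i → M) :
    ∑ᶠ y ∈ Set.univ.pi s, ∏ i, f i (y i) = ∏ i, ∑ᶠ z ∈ s i, f i z := by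
  classical
  have := fun i => Fintype.ofFinite (κ i)
  have hs : Set.univ.pi s = Fintype.piFinset fun i => (s i).toFinset := by simp
  simp only [hs, finsum_mem_coe_finset, finsum_mem_eq_toFinset_sum, prod_univ_sum]

section FiniteRing

variable {R : Type*} [Ring R] [Finite R]

theorem eq_zero_of_forall_finsum_mem_span_singleton_eq_zero {d : R → ℝ}
    (hd : ∀ x y, Ideal.span {x} = Ideal.span {y} → d x = d y)
    (hsum : ∀ x, ∑ᶠ y ∈ ((Ideal.span {x} : Ideal R) : Set R), d y = 0) (x : R) : d x = 0 := by
  induction hI : Ideal.span {x} using WellFoundedLT.induction generalizing x with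
  | _ I ih =>
  set G := {y : R | Ideal.span {y} = I}
  have hGI : G ⊆ (I : Set R) := fun y hy => hy ▸ Ideal.mem_span_singleton_self y
  have hrest : ∑ᶠ y ∈ (I : Set R) \ G, d y = 0 := finsum_mem_eq_zero_of_forall_eq_zero
    fun y hy => ih _ (lt_of_le_of_ne ((Ideal.span_singleton_le_iff_mem _).mpr hy.1) hy.2) y rfl
  have hG : ∑ᶠ y ∈ G, d y = G.ncard • d x :=
    (finsum_mem_congr rfl fun y hy => hd y x (hy.trans hI.symm)).trans
      (finsum_mem_const (Set.toFinite G) _)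
  have hxG : x ∈ G := hI
  have := hsum x
  rw [hI, ← finsum_mem_add_sdiff hGI (Set.toFinite _), hrest, add_zero, hG,
    smul_eq_zero] at this
  exact this.resolve_left (Set.ncard_ne_zero_of_mem hxG)

theorem IsHomogeneousWeight.unique {w w' : R → ℝ} {lam : ℝ} (hw : IsHomogeneousWeight w lam)
    (hw' : IsHomogeneousWeight w' lam) : w = w' := by
  refine funext fun x => sub_eq_zero.mp <|
    eq_zero_of_forall_finsum_mem_span_singleton_eq_zero (d := w - w')
      (fun x y h => by simp only [Pi.sub_apply, hw.2.2.1 x y h, hw'.2.2.1 x y h]) (fun x => ?_) x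
  rcases eq_or_ne x 0 with rfl | hx
  · simp [hw.2.1, hw'.2.1]
  · rw [Pi.sub_def, finsum_mem_sub_distrib _ _ (Set.toFinite _), hw.2.2.2 x hx, hw'.2.2.2 x hx,
      sub_self]

/-- `ψ x = μ(0, Rx) / #{generators of Rx}`, with `μ` the Möbius function of the poset of
principal ideals. -/
structure IsMoebiusDensity (ψ : R → ℝ) : Prop where
  eq_of_span_eq : ∀ x y, Ideal.span {x} = Ideal.span {y} → ψ x = ψ y
  map_zero : ψ 0 = 1
  finsum_mem_span : ∀ x ≠ 0, ∑ᶠ y ∈ ((Ideal.span {x} : Ideal R) : Set R), ψ y = 0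

theorem IsMoebiusDensity.isHomogeneousWeight {ψ : R → ℝ} (hψ : IsMoebiusDensity ψ) {lam : ℝ}
    (hlam : 0 ≤ lam) : IsHomogeneousWeight (fun y => lam * (1 - ψ y)) lam := by
  refine ⟨hlam, by simp [hψ.map_zero], fun x y h => by simp only [hψ.eq_of_span_eq x y h],
    fun x hx => ?_⟩
  have hfin := Set.toFinite ((Ideal.span {x} : Ideal R) : Set R)
  simp only [mul_sub, mul_one]
  rw [finsum_mem_sub_distrib _ _ hfin, ← mul_finsum_mem' _ _ hfin, hψ.finsum_mem_span x hx,
    finsum_mem_const hfin, ← Nat.card_coe_set_eq, nsmul_eq_mul, mul_zero, sub_zero, mul_comm]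
  rfl

end FiniteRing

section Pi

variable {ι : Type*} {R : ι → Type*} [∀ i, CommRing (R i)]

theorem Ideal.mem_span_singleton_pi {x y : ∀ i, R i} :
    y ∈ Ideal.span {x} ↔ ∀ i, y i ∈ Ideal.span {x i} := by
  simp only [Ideal.mem_span_singleton, pi_dvd_iff]

theorem Ideal.coe_span_singleton_pi (x : ∀ i, R i) :
    ((Ideal.span {x} : Ideal (∀ i, R i)) : Set (∀ i, R i)) =
      Set.univ.pi fun i => ((Ideal.span {x i} : Ideal (R i)) : Set (R i)) := by
  ext y
  simp [Ideal.mem_span_singleton_pi]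

theorem IsMoebiusDensity.pi [Fintype ι] [DecidableEq ι] [∀ i, Finite (R i)]
    {ψ : ∀ i, R i → ℝ} (hψ : ∀ i, IsMoebiusDensity (ψ i)) :
    IsMoebiusDensity fun y : ∀ i, R i => ∏ i, ψ i (y i) where
  eq_of_span_eq x y h := by
    refine prod_congr rfl fun i _ => (hψ i).eq_of_span_eq _ _ ?_
    refine le_antisymm ?_ ?_ <;> rw [Ideal.span_singleton_le_iff_mem]
    · exact Ideal.mem_span_singleton_pi.mp (h ▸ Ideal.mem_span_singleton_self x) i
    · exact Ideal.mem_span_singleton_pi.mp (h ▸ Ideal.mem_span_singleton_self y) i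
  map_zero := prod_eq_one fun i _ => (hψ i).map_zero
  finsum_mem_span x hx := by
    obtain ⟨i, hi⟩ := Function.ne_iff.mp hx
    rw [Ideal.coe_span_singleton_pi, finsum_mem_univ_pi_prod]
    exact prod_eq_zero (mem_univ i) ((hψ i).finsum_mem_span _ hi)

end Pi

section MinimalIdeal

variable {R : Type*} [Ring R]

open Classical in
noncomputable def minimalIdealDensity (S : Ideal R) (y : R) : ℝ :=
  if y = 0 then 1 else if y ∈ S then -1 / ((Nat.card S : ℝ) - 1) else 0

theorem minimalIdealDensity_eq_of_span_eq (S : Ideal R) {x y : R}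
    (h : Ideal.span {x} = Ideal.span {y}) : minimalIdealDensity S x = minimalIdealDensity S y := by
  have h0 : x = 0 ↔ y = 0 := by
    rw [← Ideal.span_singleton_eq_bot, h, Ideal.span_singleton_eq_bot]
  have hS : x ∈ S ↔ y ∈ S := by
    rw [← Ideal.span_singleton_le_iff_mem, h, Ideal.span_singleton_le_iff_mem]
  classical
  exact if_congr h0 rfl (if_congr hS rfl rfl)

theorem finsum_mem_minimalIdealDensity_self [Finite R] {S : Ideal R} (hS : S ≠ ⊥) :
    ∑ᶠ y ∈ (S : Set R), minimalIdealDensity S y = 0 := by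
  have hcard : 1 < Nat.card S :=
    Finite.one_lt_card_iff_nontrivial.mpr (Submodule.nontrivial_iff_ne_bot.mpr hS)
  have hne : (Nat.card S : ℝ) - 1 ≠ 0 := by
    rw [sub_ne_zero]
    exact_mod_cast hcard.ne'
  have hfin : ((S : Set R) \ {0}).Finite := Set.toFinite _
  have hon : ∀ y ∈ (S : Set R) \ {0}, minimalIdealDensity S y = -1 / ((Nat.card S : ℝ) - 1) :=
    fun y hy => (if_neg hy.2).trans (if_pos hy.1)
  rw [← Set.insert_eq_of_mem S.zero_mem, ← Set.insert_sdiff_singleton,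
    finsum_mem_insert _ (fun h => h.2 rfl) hfin, finsum_mem_congr rfl hon, finsum_mem_const hfin,
    Set.ncard_sdiff_singleton_of_mem S.zero_mem, ← Nat.card_coe_set_eq, nsmul_eq_mul]
  change minimalIdealDensity S 0 + ((Nat.card S - 1 : ℕ) : ℝ) * _ = 0
  rw [Nat.cast_sub hcard.le, Nat.cast_one, minimalIdealDensity, if_pos rfl]
  field_simp
  ring

theorem isMoebiusDensity_minimalIdealDensity [Finite R] {S : Ideal R} (hS : S ≠ ⊥)
    (hmin : ∀ x ≠ (0 : R), S ≤ Ideal.span {x}) : IsMoebiusDensity (minimalIdealDensity S) where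
  eq_of_span_eq _ _ := minimalIdealDensity_eq_of_span_eq S
  map_zero := by simp [minimalIdealDensity]
  finsum_mem_span x hx := by
    have hoff : ∀ y ∈ ((Ideal.span {x} : Ideal R) : Set R) \ S, minimalIdealDensity S y = 0 :=
      fun y hy => by
        have hyS : y ∉ S := hy.2
        have hy0 : y ≠ 0 := fun h => hyS (h ▸ S.zero_mem)
        simp [minimalIdealDensity, hy0, hyS]
    rw [← finsum_mem_add_sdiff (hmin x hx) (Set.toFinite _),
      finsum_mem_eq_zero_of_forall_eq_zero hoff, add_zero, finsum_mem_minimalIdealDensity_self hS]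

end MinimalIdeal

section NilpotentGenerator

variable {R : Type*} [CommRing R] {γ : R} {e : ℕ}

theorem pow_mem_span_pow_pred_iff (hγe : γ ^ e = 0) (hγe1 : γ ^ (e - 1) ≠ 0) {j : ℕ} :
    γ ^ j ∈ Ideal.span {γ ^ (e - 1)} ↔ e - 1 ≤ j := by
  refine ⟨fun h => ?_, fun h => Ideal.mem_span_singleton.mpr (pow_dvd_pow γ h)⟩
  by_contra hj
  obtain ⟨c, hc⟩ := Ideal.mem_span_singleton'.mp h
  apply hγe1
  calc γ ^ (e - 1) = γ ^ (e - 1 - j) * γ ^ j := by rw [← pow_add]; congr 1; omega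
    _ = c * γ ^ (e - 1 - j + (e - 1)) := by rw [← hc, pow_add]; ring
    _ = 0 := by rw [pow_eq_zero_of_le (by omega) hγe, mul_zero]

theorem minimalIdealDensity_unit_mul_pow (hγe : γ ^ e = 0) (hγe1 : γ ^ (e - 1) ≠ 0) (u : Rˣ)
    {j : ℕ} (hj : j ≤ e) :
    minimalIdealDensity (Ideal.span {γ ^ (e - 1)}) (u * γ ^ j) =
      if e - j = 0 then 1
      else if e - j = 1 then -1 / ((Nat.card (Ideal.span {γ ^ (e - 1)}) : ℝ) - 1) else 0 := by
  have hzero : (u : R) * γ ^ j = 0 ↔ e - j = 0 := by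
    rw [Units.mul_right_eq_zero]
    refine ⟨fun h => ?_, fun h => pow_eq_zero_of_le (by omega) hγe⟩
    by_contra hj'
    exact hγe1 (pow_eq_zero_of_le (by omega) h)
  have hmem : (u : R) * γ ^ j ∈ Ideal.span {γ ^ (e - 1)} ↔ e - j ≤ 1 := by
    rw [Ideal.unit_mul_mem_iff_mem _ u.isUnit, pow_mem_span_pow_pred_iff hγe hγe1]
    omega
  rw [minimalIdealDensity]
  rcases (by omega : e - j = 0 ∨ e - j = 1 ∨ 2 ≤ e - j) with h | h | h
  · rw [if_pos (hzero.mpr h), if_pos h]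
  · rw [if_neg (hzero.not.mpr (by omega)), if_pos (hmem.mpr h.le), if_neg (by omega), if_pos h]
  · rw [if_neg (hzero.not.mpr (by omega)), if_neg (hmem.not.mpr (by omega)), if_neg (by omega),
      if_neg (by omega)]

end NilpotentGenerator

section ChainRing

variable {R : Type*} [CommRing R] [IsLocalRing R] {γ : R} {e : ℕ}

theorem exists_eq_unit_mul_pow (hmax : IsLocalRing.maximalIdeal R = Ideal.span {γ})
    (hγ : IsNilpotent γ) (x : R) : ∃ (v : Rˣ) (a : ℕ), x = v * γ ^ a := by
  obtain ⟨e, hγe⟩ := hγ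
  suffices h : ∀ m n, e ≤ n + m → ∀ y ∈ Ideal.span {γ ^ n}, ∃ (v : Rˣ) (a : ℕ), y = v * γ ^ a from
    h e 0 (by omega) x (by simp)
  intro m
  induction m with
  | zero =>
    intro n hn y hy
    obtain ⟨c, rfl⟩ := Ideal.mem_span_singleton'.mp hy
    have hγn : γ ^ n = 0 := pow_eq_zero_of_le (by omega) hγe
    exact ⟨1, n, by simp [hγn]⟩
  | succ m ih =>
    intro n hn y hy
    obtain ⟨c, rfl⟩ := Ideal.mem_span_singleton'.mp hy
    by_cases hc : IsUnit c
    · exact ⟨hc.unit, n, rfl⟩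
    · obtain ⟨d, rfl⟩ : ∃ d, d * γ = c :=
        Ideal.mem_span_singleton'.mp (hmax ▸ (IsLocalRing.mem_maximalIdeal c).mpr hc)
      exact ih (n + 1) (by omega) _ (Ideal.mem_span_singleton'.mpr ⟨d, by ring⟩)

theorem span_pow_pred_le_span_singleton (hmax : IsLocalRing.maximalIdeal R = Ideal.span {γ})
    (hγe : γ ^ e = 0) {x : R} (hx : x ≠ 0) : Ideal.span {γ ^ (e - 1)} ≤ Ideal.span {x} := by
  obtain ⟨v, a, rfl⟩ := exists_eq_unit_mul_pow hmax ⟨e, hγe⟩ x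
  have ha : a < e := by
    by_contra h
    exact hx (by rw [pow_eq_zero_of_le (not_lt.mp h) hγe, mul_zero])
  rw [Ideal.span_singleton_le_iff_mem, Ideal.mem_span_singleton']
  refine ⟨γ ^ (e - 1 - a) * ↑v⁻¹, ?_⟩
  rw [mul_assoc, ← mul_assoc (↑v⁻¹ : R), Units.inv_mul, one_mul, ← pow_add]
  congr 1
  omega

theorem torsionOf_pow_pred (hmax : IsLocalRing.maximalIdeal R = Ideal.span {γ})
    (hγe : γ ^ e = 0) (hγe1 : γ ^ (e - 1) ≠ 0) :
    Ideal.torsionOf R R (γ ^ (e - 1)) = Ideal.span {γ} := by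
  have he : e ≠ 0 := by
    rintro rfl
    exact hγe1 hγe
  rw [← hmax]
  refine ((IsLocalRing.maximalIdeal.isMaximal R).eq_of_le ?_ ?_).symm
  · rw [Ne, Ideal.eq_top_iff_one, Ideal.mem_torsionOf_iff, one_smul]
    exact hγe1
  · rw [hmax, Ideal.span_singleton_le_iff_mem, Ideal.mem_torsionOf_iff, smul_eq_mul, ← pow_succ',
      Nat.sub_add_cancel (Nat.pos_of_ne_zero he), hγe]

theorem card_span_pow_pred (hmax : IsLocalRing.maximalIdeal R = Ideal.span {γ})
    (hγe : γ ^ e = 0) (hγe1 : γ ^ (e - 1) ≠ 0) :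
    Nat.card (Ideal.span {γ ^ (e - 1)}) = Nat.card (R ⧸ Ideal.span {γ}) := by
  rw [← torsionOf_pow_pred hmax hγe hγe1]
  exact (Nat.card_congr (Ideal.quotTorsionOfEquivSpanSingleton R R _).toEquiv).symm

end ChainRing

theorem product_chain_ring_homogeneous_weight_general (s : ℕ) (R : Fin s → Type*)
    [∀ k, CommRing (R k)] [∀ k, Fintype (R k)] [∀ k, IsLocalRing (R k)]
    (γ : ∀ k, R k) (hmax : ∀ k, IsLocalRing.maximalIdeal (R k) = Ideal.span {γ k})
    (e : Fin s → ℕ)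
    (hγe : ∀ k, γ k ^ e k = 0) (hγe1 : ∀ k, γ k ^ (e k - 1) ≠ 0)
    (q : Fin s → ℕ) (hq : ∀ k, q k = Nat.card (R k ⧸ (Ideal.span {γ k} : Ideal (R k))))
    (w : (∀ k, R k) → ℝ) (lam : ℝ) (hw : IsHomogeneousWeight w lam)
    (x : ∀ k, R k) (u : ∀ k, (R k)ˣ) (j : Fin s → ℕ) (hj : ∀ k, j k ≤ e k)
    (hx : ∀ k, x k = (u k : R k) * γ k ^ j k) :
    ((∃ k, 2 ≤ e k - j k) → w x = lam) ∧
    ((∀ k, e k - j k ≤ 1) → w x = lam *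
      (1 - (-1 : ℝ) ^ (Finset.univ.filter (fun k => e k - j k = 1)).card /
        ∏ k ∈ Finset.univ.filter (fun k => e k - j k = 1), ((q k : ℝ) - 1))) := by
  set S := fun k => Ideal.span {γ k ^ (e k - 1)}
  have hψ : ∀ k, IsMoebiusDensity (minimalIdealDensity (S k)) := fun k =>
    isMoebiusDensity_minimalIdealDensity (Ideal.span_singleton_eq_bot.not.mpr (hγe1 k))
      fun _ hy => span_pow_pred_le_span_singleton (hmax k) (hγe k) hy
  have hwx : w x = lam * (1 - ∏ k, minimalIdealDensity (S k) (x k)) :=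
    congrFun (hw.unique ((IsMoebiusDensity.pi hψ).isHomogeneousWeight hw.1)) x
  have hfactor : ∀ k, minimalIdealDensity (S k) (x k) = if e k - j k = 0 then 1
      else if e k - j k = 1 then -1 / ((q k : ℝ) - 1) else 0 := fun k => by
    rw [hx k, minimalIdealDensity_unit_mul_pow (hγe k) (hγe1 k) (u k) (hj k),
      card_span_pow_pred (hmax k) (hγe k) (hγe1 k), hq k]
  simp only [hwx, hfactor]
  refine ⟨fun ⟨k, hk⟩ => ?_, fun hall => ?_⟩
  · rw [prod_eq_zero (mem_univ k) (by rw [if_neg (by omega), if_neg (by omega)]), sub_zero,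
      mul_one]
  · have hone : ∀ k, (if e k - j k = 0 then 1 else if e k - j k = 1 then -1 / ((q k : ℝ) - 1)
        else 0) = if e k - j k = 1 then -1 / ((q k : ℝ) - 1) else 1 := fun k => by
      have := hall k
      split_ifs <;> first | rfl | omega
    rw [prod_congr rfl fun k _ => hone k, ← prod_filter, prod_div_distrib, prod_const]

/-- Let `R = R_1 × ⋯ × R_s` be a finite product of finite chain rings
(`R_k` a finite commutative local ring with maximal ideal `R_k γ_k`, nilpotency index
`e_k`, residue field of cardinality `q_k`), and let `w` be a homogeneous weight on `R`
with average value `λ`. Let `x = (x_1, …, x_s)` with `x_k = u_k γ_k^(j_k)`, `u_k` a unit,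
`0 ≤ j_k ≤ e_k`, and set `i_k = e_k - j_k`. If some `i_k ≥ 2` then `w x = λ`; if all
`i_k ≤ 1` then `w x = λ (1 - (-1)^β / ∏_{k : i_k = 1} (q_k - 1))`, where `β` is the
number of indices `k` with `i_k = 1`. -/
theorem product_chain_ring_homogeneous_weight (s : ℕ) (R : Fin s → Type*)
    [∀ k, CommRing (R k)] [∀ k, Fintype (R k)] [∀ k, IsLocalRing (R k)]
    (γ : ∀ k, R k) (hmax : ∀ k, IsLocalRing.maximalIdeal (R k) = Ideal.span {γ k})
    (e : Fin s → ℕ) (he : ∀ k, 0 < e k)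
    (hγe : ∀ k, γ k ^ e k = 0) (hγe1 : ∀ k, γ k ^ (e k - 1) ≠ 0)
    (q : Fin s → ℕ) (hq : ∀ k, q k = Nat.card (R k ⧸ (Ideal.span {γ k} : Ideal (R k))))
    (w : (∀ k, R k) → ℝ) (lam : ℝ) (hw : IsHomogeneousWeight w lam)
    (x : ∀ k, R k) (u : ∀ k, (R k)ˣ) (j : Fin s → ℕ) (hj : ∀ k, j k ≤ e k)
    (hx : ∀ k, x k = (u k : R k) * γ k ^ j k) :
    ((∃ k, 2 ≤ e k - j k) → w x = lam) ∧
    ((∀ k, e k - j k ≤ 1) → w x = lam *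
      (1 - (-1 : ℝ) ^ (Finset.univ.filter (fun k => e k - j k = 1)).card /
        ∏ k ∈ Finset.univ.filter (fun k => e k - j k = 1), ((q k : ℝ) - 1))) :=
  product_chain_ring_homogeneous_weight_general s R γ hmax e hγe hγe1 q hq w lam hw x u j hj hx
end

section
/- Let n > 1 be an integer and let w be a homogeneous weight on the ring ℤ_n of integers modulo n with average value λ. Then for every positive divisor m of n and every unit u of ℤ_n, w(u · (n/m)) = w(n/m) = λ·(1 − μ(m)/φ(m)), where μ is the classical number-theoretic Möbius function and φ is the classical number-theoretic Euler phi-function (Euler totient). -/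
open Finset
open scoped ArithmeticFunction.Moebius

namespace ArithmeticFunction

theorem sum_divisors_moebius (n : ℕ) :
    ∑ d ∈ n.divisors, μ d = if n = 1 then 1 else 0 := by
  rw [← coe_mul_zeta_apply, moebius_mul_coe_zeta, one_apply]

theorem eq_on_of_sum_divisors_eq_on {R : Type*} [AddCommGroup R] {f g : ℕ → R} (s : Set ℕ)
    (hs : ∀ m n, m ∣ n → n ∈ s → m ∈ s)
    (h : ∀ n > 0, n ∈ s → ∑ i ∈ n.divisors, f i = ∑ i ∈ n.divisors, g i) :
    ∀ n > 0, n ∈ s → f n = g n := by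
  intro n hn hns
  rw [← (sum_eq_iff_sum_smul_moebius_eq_on s hs).1 h n hn hns,
    (sum_eq_iff_sum_smul_moebius_eq_on s hs).1 (fun _ _ _ ↦ rfl) n hn hns]

end ArithmeticFunction

theorem IsAddCyclic.sum_filter_addOrderOf_dvd {α M : Type*} [AddGroup α] [Fintype α]
    [IsAddCyclic α] [AddCommMonoid M] {d : ℕ} (hd : d ∣ Fintype.card α) (f : ℕ → M) :
    ∑ y : α with addOrderOf y ∣ d, f (addOrderOf y) = ∑ e ∈ d.divisors, Nat.totient e • f e := by
  have hd0 : d ≠ 0 := by rintro rfl; simp at hd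
  rw [← sum_fiberwise_of_maps_to (g := addOrderOf) (t := d.divisors)
    (fun y hy ↦ Nat.mem_divisors.2 ⟨(mem_filter.1 hy).2, hd0⟩)]
  refine sum_congr rfl fun e he ↦ ?_
  have hfiber : ((univ.filter fun y : α ↦ addOrderOf y ∣ d).filter fun y ↦ addOrderOf y = e) =
      univ.filter fun y : α ↦ addOrderOf y = e := by
    rw [filter_filter]
    refine filter_congr fun y _ ↦ ?_
    simp only [and_iff_right_iff_imp]
    rintro rfl
    exact Nat.dvd_of_mem_divisors he
  rw [hfiber, sum_congr rfl fun y hy ↦ by rw [(mem_filter.1 hy).2], sum_const,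
    IsAddCyclic.card_addOrderOf_eq_totient ((Nat.dvd_of_mem_divisors he).trans hd)]

namespace ZMod

theorem span_natCast_eq_span_gcd (n a : ℕ) :
    Ideal.span {(a : ZMod n)} = Ideal.span {((a.gcd n : ℕ) : ZMod n)} := by
  have hgcd : ((a.gcd n : ℕ) : ℤ) = gcd (a : ℤ) (n : ℤ) := by
    rw [← Int.coe_gcd, Int.gcd_natCast_natCast]
  calc Ideal.span {(a : ZMod n)} = Ideal.span {(a : ZMod n), (n : ZMod n)} := by
        rw [natCast_self, Ideal.span_pair_zero]
    _ = Ideal.span {((a.gcd n : ℕ) : ZMod n)} := by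
        have := congrArg (Ideal.map (Int.castRingHom (ZMod n))) (span_gcd (a : ℤ) (n : ℤ))
        simpa [Ideal.map_span, Set.image_pair, ← hgcd] using this.symm

theorem span_eq_span_natCast_div_addOrderOf {n : ℕ} [NeZero n] (y : ZMod n) :
    Ideal.span {y} = Ideal.span {((n / addOrderOf y : ℕ) : ZMod n)} := by
  have hord : addOrderOf y = n / n.gcd y.val := by
    conv_lhs => rw [← natCast_zmod_val y]
    exact addOrderOf_coe _ (NeZero.ne n)
  rw [hord, Nat.div_div_self (Nat.gcd_dvd_left _ _) (NeZero.ne n), Nat.gcd_comm,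
    ← span_natCast_eq_span_gcd, natCast_zmod_val]

theorem mem_span_natCast_div_iff {n d : ℕ} [NeZero n] (hd : d ∣ n) (y : ZMod n) :
    y ∈ Ideal.span {((n / d : ℕ) : ZMod n)} ↔ addOrderOf y ∣ d := by
  obtain ⟨q, rfl⟩ := hd
  have hd0 : d ≠ 0 := left_ne_zero_of_mul (NeZero.ne (d * q))
  rw [Nat.mul_div_cancel_left q (Nat.pos_of_ne_zero hd0), Ideal.mem_span_singleton,
    addOrderOf_dvd_iff_nsmul_eq_zero, nsmul_eq_mul]
  constructor
  · rintro ⟨c, rfl⟩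
    rw [← mul_assoc, ← Nat.cast_mul, natCast_self, zero_mul]
  · intro h
    rw [← natCast_zmod_val y, ← Nat.cast_mul, natCast_eq_zero_iff] at h
    obtain ⟨t, ht⟩ := Nat.dvd_of_mul_dvd_mul_left (Nat.pos_of_ne_zero hd0) h
    exact ⟨t, by rw [← natCast_zmod_val y, ht, Nat.cast_mul]⟩

end ZMod

namespace IsHomogeneousWeight

section Ring

variable {R : Type*} [Ring R] {w : R → ℝ} {lam : ℝ}

theorem apply_zero (hw : IsHomogeneousWeight w lam) : w 0 = 0 := hw.2.1

theorem apply_eq_of_span_eq (hw : IsHomogeneousWeight w lam) {x y : R}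
    (h : Ideal.span {x} = Ideal.span {y}) : w x = w y :=
  hw.2.2.1 x y h

theorem finsum_span (hw : IsHomogeneousWeight w lam) {x : R} (hx : x ≠ 0) :
    ∑ᶠ y ∈ ((Ideal.span {x} : Ideal R) : Set R), w y =
      lam * (Nat.card (Ideal.span {x} : Ideal R) : ℝ) :=
  hw.2.2.2 x hx

end Ring

theorem apply_units_mul {R : Type*} [CommRing R] {w : R → ℝ} {lam : ℝ}
    (hw : IsHomogeneousWeight w lam) (u : Rˣ) (x : R) : w (u * x) = w x :=
  hw.apply_eq_of_span_eq (Ideal.span_singleton_mul_left_unit u.isUnit x)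

variable {n : ℕ} [NeZero n] {w : ZMod n → ℝ} {lam : ℝ}

theorem apply_eq_apply_natCast_div_addOrderOf (hw : IsHomogeneousWeight w lam) (y : ZMod n) :
    w y = w ((n / addOrderOf y : ℕ) : ZMod n) :=
  hw.apply_eq_of_span_eq (ZMod.span_eq_span_natCast_div_addOrderOf y)

theorem sum_divisors_totient_mul_of_one_lt (hw : IsHomogeneousWeight w lam) {d : ℕ}
    (hd : d ∣ n) (hd1 : 1 < d) :
    ∑ e ∈ d.divisors, (e.totient : ℝ) * w ((n / e : ℕ) : ZMod n) = lam * d := by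
  have hx : ((n / d : ℕ) : ZMod n) ≠ 0 := by
    have hpos : 0 < n / d := Nat.div_pos (Nat.le_of_dvd (NeZero.pos n) hd) (by omega)
    have hlt : n / d < n := Nat.div_lt_self (NeZero.pos n) hd1
    rw [Ne, ZMod.natCast_eq_zero_iff]
    exact fun h ↦ (Nat.le_of_dvd hpos h).not_gt hlt
  have hspan : ((Ideal.span {((n / d : ℕ) : ZMod n)} : Ideal (ZMod n)) : Set (ZMod n)) =
      ↑(univ.filter fun y : ZMod n ↦ addOrderOf y ∣ d) := by
    ext y
    simp [ZMod.mem_span_natCast_div_iff hd]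
  have hdcard : d ∣ Fintype.card (ZMod n) := by rwa [ZMod.card]
  have h := hw.finsum_span hx
  rw [← SetLike.coe_sort_coe, hspan, Nat.card_coe_set_eq, Set.ncard_coe_finset,
    finsum_mem_coe_finset] at h
  have hweights : ∑ y : ZMod n with addOrderOf y ∣ d, w y =
      ∑ e ∈ d.divisors, e.totient • w ((n / e : ℕ) : ZMod n) := by
    rw [← IsAddCyclic.sum_filter_addOrderOf_dvd hdcard]
    exact sum_congr rfl fun y _ ↦ hw.apply_eq_apply_natCast_div_addOrderOf y
  have hcount : #{y : ZMod n | addOrderOf y ∣ d} = d := by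
    rw [card_eq_sum_ones]
    exact (IsAddCyclic.sum_filter_addOrderOf_dvd hdcard fun _ ↦ 1).trans
      (by simp [Nat.sum_totient])
  rw [hweights, hcount] at h
  simpa only [nsmul_eq_mul] using h

theorem sum_divisors_totient_mul (hw : IsHomogeneousWeight w lam) {d : ℕ}
    (hd : d ∣ n) (hd0 : 0 < d) :
    ∑ e ∈ d.divisors, (e.totient : ℝ) * w ((n / e : ℕ) : ZMod n) =
      ∑ e ∈ d.divisors, lam * (e.totient - μ e) := by
  rw [← mul_sum, sum_sub_distrib, ← Nat.cast_sum, Nat.sum_totient, ← Int.cast_sum,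
    ArithmeticFunction.sum_divisors_moebius]
  rcases (Nat.one_le_iff_ne_zero.2 hd0.ne').eq_or_lt with rfl | hd1
  · simp [hw.apply_zero]
  · simp [hd1.ne', hw.sum_divisors_totient_mul_of_one_lt hd hd1]

theorem totient_mul_apply_natCast_div (hw : IsHomogeneousWeight w lam) {m : ℕ}
    (hm : 0 < m) (hmn : m ∣ n) :
    (m.totient : ℝ) * w ((n / m : ℕ) : ZMod n) = lam * (m.totient - μ m) :=
  ArithmeticFunction.eq_on_of_sum_divisors_eq_on {d | d ∣ n} (fun _ _ h₁ h₂ ↦ h₁.trans h₂)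
    (fun _ hd hdn ↦ hw.sum_divisors_totient_mul hdn hd) m hm hmn

end IsHomogeneousWeight

/-- Let `n > 1` and let `w` be a homogeneous weight on `ℤ_n = ZMod n` with
average value `λ`. Then for every positive divisor `m` of `n` and every unit `u` of
`ℤ_n`, `w(u ⬝ (n/m)) = w(n/m) = λ (1 - μ(m)/φ(m))`, where `μ` is the classical
number-theoretic Möbius function and `φ` the Euler totient function. -/
theorem zmod_homogeneous_weight_formula (n : ℕ) (hn : 1 < n)
    (w : ZMod n → ℝ) (lam : ℝ) (hw : IsHomogeneousWeight w lam)
    (m : ℕ) (hm : 0 < m) (hmn : m ∣ n) (u : (ZMod n)ˣ) :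
    w ((u : ZMod n) * ((n / m : ℕ) : ZMod n)) = w (((n / m : ℕ) : ZMod n)) ∧
    w (((n / m : ℕ) : ZMod n)) =
      lam * (1 - (ArithmeticFunction.moebius m : ℝ) / (Nat.totient m : ℝ)) := by
  have : NeZero n := ⟨by omega⟩
  have hφ : (m.totient : ℝ) ≠ 0 := by exact_mod_cast (Nat.totient_pos.2 hm).ne'
  refine ⟨hw.apply_units_mul u _, ?_⟩
  field_simp
  linear_combination hw.totient_mul_apply_natCast_div hm hmn
end

section
/- Let n > 1 be an integer and let w be a homogeneous weight on the ring ℤ_n of integers modulo n with average value λ. Then for every positive divisor m of n: if m is not squarefree, then w(n/m) = λ; if m is squarefree and has an even number of distinct prime divisors, then w(n/m) = λ·(φ(m) − 1)/φ(m); and if m is squarefree and has an odd number of distinct prime divisors, then w(n/m) = λ·(φ(m) + 1)/φ(m), where φ is the Euler totient function. -/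
open Finset ArithmeticFunction

lemma HW.aux_order (n : ℕ) (hn : n ≠ 0) {d : ℕ} (hd : d ∣ n) :
    addOrderOf ((n / d : ℕ) : ZMod n) = d := by
  rw [ZMod.addOrderOf_coe _ hn, Nat.gcd_eq_right (Nat.div_dvd_of_dvd hd), Nat.div_div_self hd hn]

lemma HW.span_gcd_eq (n : ℕ) [NeZero n] (y : ZMod n) :
    Ideal.span {y} = Ideal.span {((Nat.gcd n y.val : ℕ) : ZMod n)} := by
  have hval : ((y.val : ℕ) : ZMod n) = y := ZMod.natCast_rightInverse y
  apply le_antisymm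
  · rw [Ideal.span_singleton_le_span_singleton]
    refine dvd_trans ?_ (dvd_of_eq hval)
    exact_mod_cast Nat.cast_dvd_cast (Nat.gcd_dvd_right n y.val)
  · rw [Ideal.span_singleton_le_span_singleton]
    refine ⟨((Nat.gcdB n y.val : ℤ) : ZMod n), ?_⟩
    calc ((Nat.gcd n y.val : ℕ) : ZMod n)
        = (((n : ℤ) * Nat.gcdA n y.val + (y.val : ℤ) * Nat.gcdB n y.val : ℤ) : ZMod n) := by
          rw [← Nat.gcd_eq_gcd_ab]; push_cast; ring
      _ = y * ((Nat.gcdB n y.val : ℤ) : ZMod n) := by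
          push_cast
          rw [ZMod.natCast_self, hval]; ring

lemma HW.span_order_eq (n : ℕ) [NeZero n] (y : ZMod n) :
    Ideal.span {y} = Ideal.span {((n / addOrderOf y : ℕ) : ZMod n)} := by
  have hval : ((y.val : ℕ) : ZMod n) = y := ZMod.natCast_rightInverse y
  have hord : addOrderOf y = n / Nat.gcd n y.val := by
    conv_lhs => rw [← hval]
    exact ZMod.addOrderOf_coe _ (NeZero.ne n)
  have hg : Nat.gcd n y.val ∣ n := Nat.gcd_dvd_left n y.val
  have : n / addOrderOf y = Nat.gcd n y.val := by
    rw [hord, Nat.div_div_self hg (NeZero.ne n)]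
  rw [this]; exact HW.span_gcd_eq n y

lemma HW.mem_span_iff_zmult (n : ℕ) [NeZero n] (x y : ZMod n) :
    y ∈ Ideal.span {x} ↔ y ∈ AddSubgroup.zmultiples x := by
  rw [Ideal.mem_span_singleton, AddSubgroup.mem_zmultiples_iff]
  constructor
  · rintro ⟨c, rfl⟩
    refine ⟨(c.val : ℤ), ?_⟩
    rw [zsmul_eq_mul]
    push_cast
    rw [ZMod.natCast_rightInverse c, mul_comm]
  · rintro ⟨k, rfl⟩
    exact ⟨(k : ZMod n), by rw [zsmul_eq_mul, mul_comm]⟩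

lemma HW.card_span (n : ℕ) [NeZero n] (x : ZMod n) :
    Nat.card (Ideal.span {x} : Ideal (ZMod n)) = addOrderOf x := by
  have hset : ((Ideal.span {x} : Ideal (ZMod n)) : Set (ZMod n))
      = (AddSubgroup.zmultiples x : Set (ZMod n)) := by
    ext y; exact HW.mem_span_iff_zmult n x y
  rw [← Nat.card_zmultiples x]
  exact Nat.card_congr (Equiv.setCongr hset)

lemma HW.main_recursion (n : ℕ) (hn : 1 < n) (w : ZMod n → ℝ) (lam : ℝ)
    (hw : IsHomogeneousWeight w lam) (d : ℕ) (hd0 : 0 < d) (hdn : d ∣ n) :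
    ∑ e ∈ d.divisors, ((Nat.totient e : ℝ) * (w (((n / e : ℕ) : ZMod n)) - lam)) =
      if d = 1 then -lam else 0 := by
  classical
  haveI : NeZero n := ⟨by omega⟩
  have hn0 : n ≠ 0 := by omega
  by_cases hd1 : d = 1
  · subst hd1
    rw [if_pos rfl, Nat.divisors_one, Finset.sum_singleton, Nat.totient_one, Nat.div_one,
      ZMod.natCast_self, hw.2.1]
    push_cast; ring
  · have h1 : 1 < d := by omega
    rw [if_neg hd1]
    set x : ZMod n := ((n / d : ℕ) : ZMod n) with hx
    have hxord : addOrderOf x = d := HW.aux_order n hn0 hdn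
    have hxne : x ≠ 0 := by
      intro h
      rw [h, addOrderOf_zero] at hxord
      omega
    have h2 := hw.2.2.2 x hxne
    rw [HW.card_span n x, hxord] at h2
    set T : Finset (ZMod n) := Finset.univ.filter (· ∈ Ideal.span {x}) with hT
    have hTS : ((Ideal.span {x} : Ideal (ZMod n)) : Set (ZMod n)) = (T : Set (ZMod n)) := by
      ext y; simp [hT]
    rw [hTS, finsum_mem_coe_finset] at h2
    have hmaps : ∀ y ∈ T, addOrderOf y ∈ d.divisors := by
      intro y hy
      rw [Nat.mem_divisors]
      refine ⟨?_, hd0.ne'⟩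
      rw [← hxord]
      exact addOrderOf_dvd_of_mem_zmultiples
        ((HW.mem_span_iff_zmult n x y).mp (by simpa [hT] using hy))
    rw [← Finset.sum_fiberwise_of_maps_to hmaps w] at h2
    have hfiber : ∀ e ∈ d.divisors,
        ∑ y ∈ T.filter (fun y => addOrderOf y = e), w y
          = (Nat.totient e : ℝ) * w (((n / e : ℕ) : ZMod n)) := by
      intro e he
      obtain ⟨hed, -⟩ := Nat.mem_divisors.mp he
      have hcongr : ∀ y ∈ T.filter (fun y => addOrderOf y = e),
          w y = w (((n / e : ℕ) : ZMod n)) := by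
        intro y hy
        obtain ⟨-, hye⟩ := Finset.mem_filter.mp hy
        have := HW.span_order_eq n y
        rw [hye] at this
        exact hw.2.2.1 _ _ this
      rw [Finset.sum_congr rfl hcongr, Finset.sum_const, nsmul_eq_mul]
      congr 1
      have hTfil : T.filter (fun y => addOrderOf y = e)
          = Finset.univ.filter (fun y => addOrderOf y = e) := by
        ext y
        simp only [Finset.mem_filter, Finset.mem_univ, true_and, hT]
        refine ⟨fun h => h.2, fun h => ⟨?_, h⟩⟩
        have hspan := HW.span_order_eq n y
        rw [h] at hspan
        have hdvd : x ∣ ((n / e : ℕ) : ZMod n) := by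
          have he0 : 0 < e := Nat.pos_of_dvd_of_pos hed hd0
          have hen : e ∣ n := hed.trans hdn
          obtain ⟨t, ht⟩ := hed
          have hkey : (n / e : ℕ) = (n / d) * t := by
            refine Nat.eq_of_mul_eq_mul_right he0 ?_
            rw [Nat.div_mul_cancel hen, mul_assoc, mul_comm t e, ← ht, Nat.div_mul_cancel hdn]
          rw [hkey]
          push_cast
          exact Dvd.intro _ rfl
        have : Ideal.span {y} ≤ Ideal.span {x} := by
          rw [hspan, Ideal.span_singleton_le_span_singleton]
          exact hdvd
        exact this (Ideal.mem_span_singleton_self y)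
      rw [hTfil]
      have hcard := IsAddCyclic.card_addOrderOf_eq_totient (α := ZMod n) (d := e)
        (by rw [ZMod.card]; exact hed.trans hdn)
      rw [← hcard]
    rw [Finset.sum_congr rfl hfiber] at h2
    have htot : (∑ e ∈ d.divisors, (Nat.totient e : ℝ)) = (d : ℝ) := by
      rw [← Nat.cast_sum, Nat.sum_totient]
    calc ∑ e ∈ d.divisors, (Nat.totient e : ℝ) * (w (((n / e : ℕ) : ZMod n)) - lam)
        = (∑ e ∈ d.divisors, (Nat.totient e : ℝ) * w (((n / e : ℕ) : ZMod n)))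
          - (∑ e ∈ d.divisors, (Nat.totient e : ℝ)) * lam := by
          rw [Finset.sum_mul, ← Finset.sum_sub_distrib]
          exact Finset.sum_congr rfl (fun e _ => by ring)
      _ = 0 := by rw [h2, htot]; ring

lemma HW.moebius_formula (n : ℕ) (hn : 1 < n) (w : ZMod n → ℝ) (lam : ℝ)
    (hw : IsHomogeneousWeight w lam) (m : ℕ) (hm : 0 < m) (hmn : m ∣ n) :
    (Nat.totient m : ℝ) * (w (((n / m : ℕ) : ZMod n)) - lam) = -((moebius m : ℝ) * lam) := by
  have key := (sum_eq_iff_sum_smul_moebius_eq_on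
      (f := fun e => (Nat.totient e : ℝ) * (w (((n / e : ℕ) : ZMod n)) - lam))
      (g := fun d => if d = 1 then -lam else 0)
      {d | d ∣ n} (fun a b hab hb => hab.trans hb)).mp
    (fun d hd0 hdn => HW.main_recursion n hn w lam hw d hd0 hdn) m hm hmn
  rw [← key]
  rw [Finset.sum_eq_single (m, 1)]
  · simp
  · rintro ⟨a, b⟩ hab hne
    obtain ⟨habm, hm0⟩ := Nat.mem_divisorsAntidiagonal.mp hab
    have hb : b ≠ 1 := by
      rintro rfl
      exact hne (by rw [Prod.mk.injEq]; exact ⟨by simpa using habm, rfl⟩)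
    simp [hb]
  · intro h
    exact absurd (Nat.mem_divisorsAntidiagonal.mpr ⟨mul_one m, hm.ne'⟩) h

/-- Let `n > 1` and let `w` be a homogeneous weight on `ℤ_n = ZMod n` with
average value `λ`. For a positive divisor `m` of `n`: if `m` is not squarefree then
`w(n/m) = λ`; if `m` is squarefree with an even number of distinct prime divisors then
`w(n/m) = λ (φ(m) - 1)/φ(m)`; and if `m` is squarefree with an odd number of distinct
prime divisors then `w(n/m) = λ (φ(m) + 1)/φ(m)`, where `φ` is the Euler totient. -/
theorem zmod_homogeneous_weight_cases (n : ℕ) (hn : 1 < n)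
    (w : ZMod n → ℝ) (lam : ℝ) (hw : IsHomogeneousWeight w lam)
    (m : ℕ) (hm : 0 < m) (hmn : m ∣ n) :
    (¬ Squarefree m → w (((n / m : ℕ) : ZMod n)) = lam) ∧
    (Squarefree m → Even m.primeFactors.card →
      w (((n / m : ℕ) : ZMod n)) =
        lam * ((Nat.totient m : ℝ) - 1) / (Nat.totient m : ℝ)) ∧
    (Squarefree m → Odd m.primeFactors.card →
      w (((n / m : ℕ) : ZMod n)) =
        lam * ((Nat.totient m : ℝ) + 1) / (Nat.totient m : ℝ)) := by
  have heq := HW.moebius_formula n hn w lam hw m hm hmn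
  have hphi : (0 : ℝ) < (Nat.totient m : ℝ) := by
    exact_mod_cast Nat.totient_pos.mpr hm
  have homega : ∀ _ : Squarefree m, (cardFactors m : ℕ) = m.primeFactors.card := by
    intro hsq
    rw [← (cardDistinctFactors_eq_cardFactors_iff_squarefree hm.ne').mpr hsq,
      cardDistinctFactors_apply, ← List.card_toFinset, Nat.toFinset_factors]
  refine ⟨?_, ?_, ?_⟩
  · intro hns
    rw [moebius_eq_zero_of_not_squarefree hns] at heq
    simp only [Int.cast_zero, zero_mul, neg_zero] at heq
    rcases mul_eq_zero.mp heq with h | h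
    · exact absurd h hphi.ne'
    · linarith
  · intro hsq hev
    rw [← homega hsq] at hev
    rw [moebius_apply_of_squarefree hsq] at heq
    simp only [Int.cast_pow, Int.cast_neg, Int.cast_one] at heq
    rw [hev.neg_one_pow] at heq
    rw [eq_div_iff hphi.ne']
    linear_combination heq
  · intro hsq hodd
    rw [← homega hsq] at hodd
    rw [moebius_apply_of_squarefree hsq] at heq
    simp only [Int.cast_pow, Int.cast_neg, Int.cast_one] at heq
    rw [hodd.neg_one_pow] at heq
    rw [eq_div_iff hphi.ne']
    linear_combination heq
end
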